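/- arXiv:2509.14475 — 3 statements merged into one kernel-verified Lean document; each statement's English description precedes it below -/
import Mathlib

section
/- In the one-to-one stable marriage setting with strict preferences, an assignment x produced by the student-proposing deferred acceptance algorithm admits no blocking pair: there is no pair (i,j) such that i prefers j to i's match (or i is unmatched and ranks j) and j prefers i to j's match (or j is unmatched and ranks i). -/
noncomputable section

open Classical

variable {I J : Type*}

/-- `(i,j)` is a valid (mutually acceptable) pair. -/
def Acceptable (p q : I → J → ℝ) (i : I) (j : J) : Prop :=
  0 < p i j ∧ 0 < q i j

/-- The best acceptable school for student `i` that has not yet rejected `i`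
(given the current rejection set `R`), if any. -/
noncomputable def bestChoice [Fintype J] (p q : I → J → ℝ)
    (R : Finset (I × J)) (i : I) : Option J :=
  let s := Finset.univ.filter (fun j => Acceptable p q i j ∧ (i, j) ∉ R)
  if h : s.Nonempty then some (Classical.choose (s.exists_max_image (p i) h)) else none

/-- The proposer tentatively held by school `j` in the current round:
the best (for `j`) student currently proposing to `j`. -/
noncomputable def heldBy [Fintype I] [Fintype J] (p q : I → J → ℝ)
    (R : Finset (I × J)) (j : J) : Option I :=
  let s := Finset.univ.filter (fun i => bestChoice p q R i = some j)
  if h : s.Nonempty then some (Classical.choose (s.exists_max_image (fun i => q i j) h)) else none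

/-- One round of student-proposing deferred acceptance: every student proposes to
their best remaining acceptable school; each school holds its best proposer and
rejects the rest. -/
noncomputable def daRound [Fintype I] [Fintype J] (p q : I → J → ℝ)
    (R : Finset (I × J)) : Finset (I × J) :=
  R ∪ Finset.univ.filter (fun ij : I × J =>
    bestChoice p q R ij.1 = some ij.2 ∧ heldBy p q R ij.2 ≠ some ij.1)

/-- The rejection set at termination of the deferred-acceptance algorithm. -/
noncomputable def daRejections [Fintype I] [Fintype J] (p q : I → J → ℝ) :
    Finset (I × J) :=
  (daRound p q)^[Fintype.card I * Fintype.card J + 1] ∅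

/-- The matching produced by student-proposing deferred acceptance:
`i` is matched to `j` iff at termination `j` is `i`'s best never-rejecting school. -/
noncomputable def daMatch [Fintype I] [Fintype J] (p q : I → J → ℝ)
    (i : I) (j : J) : Prop :=
  bestChoice p q (daRejections p q) i = some j

/-- `(i,j)` is a blocking pair of the one-to-one matching `x`. -/
def Blocks (p q : I → J → ℝ) (x : I → J → Prop) (i : I) (j : J) : Prop :=
  Acceptable p q i j ∧
  (∀ k, x i k → p i k < p i j) ∧
  (∀ k, x k j → q k j < q i j)

lemma bestChoice_spec [Fintype J] {p q : I → J → ℝ} {R : Finset (I × J)} {i : I} {j : J}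
    (h : bestChoice p q R i = some j) :
    (Acceptable p q i j ∧ (i, j) ∉ R) ∧
      ∀ j', Acceptable p q i j' → (i, j') ∉ R → p i j' ≤ p i j := by
  classical
  simp only [bestChoice] at h
  split at h
  case isTrue hne =>
    rw [Option.some_inj] at h
    obtain ⟨hmem, hmax⟩ := Classical.choose_spec (Finset.exists_max_image _ (p i) hne)
    rw [h] at hmem hmax
    simp only [Finset.mem_filter, Finset.mem_univ, true_and] at hmem
    refine ⟨hmem, fun j' ha hnR => ?_⟩
    exact hmax j' (by simp [ha, hnR])
  case isFalse => exact absurd h (by simp)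

lemma bestChoice_isSome [Fintype J] {p q : I → J → ℝ} {R : Finset (I × J)} {i : I} {j : J}
    (ha : Acceptable p q i j) (hnR : (i, j) ∉ R) :
    ∃ k, bestChoice p q R i = some k := by
  classical
  simp only [bestChoice]
  have hne : (Finset.univ.filter (fun j => Acceptable p q i j ∧ (i, j) ∉ R)).Nonempty :=
    ⟨j, by simp [ha, hnR]⟩
  rw [dif_pos hne]
  exact ⟨_, rfl⟩

lemma heldBy_spec [Fintype I] [Fintype J] {p q : I → J → ℝ} {R : Finset (I × J)} {j : J} {i : I}
    (h : heldBy p q R j = some i) :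
    bestChoice p q R i = some j ∧
      ∀ i', bestChoice p q R i' = some j → q i' j ≤ q i j := by
  classical
  simp only [heldBy] at h
  split at h
  case isTrue hne =>
    rw [Option.some_inj] at h
    obtain ⟨hmem, hmax⟩ := Classical.choose_spec (Finset.exists_max_image _ (fun i => q i j) hne)
    rw [h] at hmem hmax
    simp only [Finset.mem_filter, Finset.mem_univ, true_and] at hmem
    exact ⟨hmem, fun i' hi' => hmax i' (by simp [hi'])⟩
  case isFalse => exact absurd h (by simp)

lemma heldBy_isSome [Fintype I] [Fintype J] {p q : I → J → ℝ} {R : Finset (I × J)} {i : I} {j : J}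
    (h : bestChoice p q R i = some j) :
    ∃ i', heldBy p q R j = some i' := by
  classical
  simp only [heldBy]
  have hne : (Finset.univ.filter (fun i => bestChoice p q R i = some j)).Nonempty :=
    ⟨i, by simp [h]⟩
  rw [dif_pos hne]
  exact ⟨_, rfl⟩

lemma bestChoice_eq_some [Fintype J] {p q : I → J → ℝ} {R : Finset (I × J)} {i : I} {j : J}
    (hp : Function.Injective (p i))
    (ha : Acceptable p q i j) (hnR : (i, j) ∉ R)
    (hmax : ∀ j', Acceptable p q i j' → (i, j') ∉ R → p i j' ≤ p i j) :
    bestChoice p q R i = some j := by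
  obtain ⟨k, hk⟩ := bestChoice_isSome ha hnR
  obtain ⟨⟨hak, hnk⟩, hmaxk⟩ := bestChoice_spec hk
  have h1 : p i j ≤ p i k := hmaxk j ha hnR
  have h2 : p i k ≤ p i j := hmax k hak hnk
  have : k = j := hp (le_antisymm h2 h1)
  rw [hk, this]

/-- A held student's best choice is unchanged after one round. -/
lemma bestChoice_daRound_held [Fintype I] [Fintype J] {p q : I → J → ℝ} {R : Finset (I × J)}
    {j : J} {i' : I} (hp : Function.Injective (p i'))
    (h : heldBy p q R j = some i') :
    bestChoice p q (daRound p q R) i' = some j := by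
  classical
  have hbc : bestChoice p q R i' = some j := (heldBy_spec h).1
  obtain ⟨⟨ha, hnR⟩, hmax⟩ := bestChoice_spec hbc
  have hnR' : (i', j) ∉ daRound p q R := by
    simp only [daRound, Finset.mem_union, Finset.mem_filter, Finset.mem_univ, true_and, not_or]
    exact ⟨hnR, by rintro ⟨-, h2⟩; exact h2 h⟩
  refine bestChoice_eq_some hp ha hnR' fun j' ha' hn' => hmax j' ha' fun hx => ?_
  exact hn' (Finset.mem_union_left _ hx)

/-- The invariant: every rejected student is dominated at that school by the held student. -/
def DAInv [Fintype I] [Fintype J] (p q : I → J → ℝ) (R : Finset (I × J)) : Prop :=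
  ∀ i j, (i, j) ∈ R → ∃ i', heldBy p q R j = some i' ∧ q i j < q i' j

lemma dainv_daRound [Fintype I] [Fintype J] {p q : I → J → ℝ}
    (hp : ∀ i, Function.Injective (p i))
    (hq : ∀ j, Function.Injective (fun i => q i j))
    {R : Finset (I × J)} (hR : DAInv p q R) : DAInv p q (daRound p q R) := by
  classical
  intro i j hij
  -- first find someone held at `j` under `R` strictly better than `i`
  have key : ∃ i₀, heldBy p q R j = some i₀ ∧ q i j < q i₀ j := by
    simp only [daRound, Finset.mem_union, Finset.mem_filter, Finset.mem_univ, true_and] at hij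
    rcases hij with hij | ⟨h1, h2⟩
    · exact hR i j hij
    · obtain ⟨i₀, hi₀⟩ := heldBy_isSome h1
      refine ⟨i₀, hi₀, ?_⟩
      have hle : q i j ≤ q i₀ j := (heldBy_spec hi₀).2 i h1
      have hne : i ≠ i₀ := by rintro rfl; exact h2 hi₀
      rcases lt_or_eq_of_le hle with hlt | heq
      · exact hlt
      · exact absurd (hq j heq) hne
  obtain ⟨i₀, hi₀, hlt⟩ := key
  have hbc' : bestChoice p q (daRound p q R) i₀ = some j := bestChoice_daRound_held (hp i₀) hi₀
  obtain ⟨i₁, hi₁⟩ := heldBy_isSome hbc'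
  exact ⟨i₁, hi₁, lt_of_lt_of_le hlt ((heldBy_spec hi₁).2 i₀ hbc')⟩

lemma dainv_daRejections [Fintype I] [Fintype J] {p q : I → J → ℝ}
    (hp : ∀ i, Function.Injective (p i))
    (hq : ∀ j, Function.Injective (fun i => q i j)) :
    DAInv p q (daRejections p q) := by
  have : ∀ n, DAInv p q ((daRound p q)^[n] ∅) := by
    intro n
    induction n with
    | zero => intro i j h; simp at h
    | succ n ih =>
      rw [Function.iterate_succ_apply']
      exact dainv_daRound hp hq ih
  exact this _

/-- with strict preferences, the matching produced by
student-proposing deferred acceptance admits no blocking pair. -/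
theorem daMatch_stable [Fintype I] [Fintype J] (p q : I → J → ℝ)
    (hp : ∀ i, Function.Injective (p i))
    (hq : ∀ j, Function.Injective (fun i => q i j)) :
    ∀ i j, ¬ Blocks p q (daMatch p q) i j := by
  rintro i j ⟨ha, hpref, hqpref⟩
  by_cases hR : (i, j) ∈ daRejections p q
  · obtain ⟨i', hi', hlt⟩ := dainv_daRejections hp hq i j hR
    have hm : daMatch p q i' j := (heldBy_spec hi').1
    exact absurd (hqpref i' hm) (not_lt_of_gt hlt)
  · obtain ⟨k, hk⟩ := bestChoice_isSome ha hR
    have hm : daMatch p q i k := hk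
    have h1 : p i k < p i j := hpref k hm
    have h2 : p i j ≤ p i k := (bestChoice_spec hk).2 j ha hR
    exact absurd h1 (not_lt_of_ge h2)

end
end

section
/- (Rural Hospitals Theorem, one-to-one case) In a stable marriage market with strict preferences, the set of matched students and the set of matched schools are identical across all stable matchings: if a student is unmatched in one stable matching, they are unmatched in every stable matching. -/
/-- A one-to-one matching on valid pairs: each student to at most one school,
each school to at most one student, only mutually acceptable pairs. -/
def IsMatching1 {I J : Type*} (p q : I → J → ℝ) (x : I → J → Prop) : Prop :=
  (∀ i j k, x i j → x i k → j = k) ∧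
  (∀ i k j, x i j → x k j → i = k) ∧
  (∀ i j, x i j → 0 < p i j ∧ 0 < q i j)

/-- `(i,j)` blocks the one-to-one matching `x`. -/
def Blocks1 {I J : Type*} (p q : I → J → ℝ) (x : I → J → Prop) (i : I) (j : J) : Prop :=
  0 < p i j ∧ 0 < q i j ∧
  (∀ k, x i k → p i k < p i j) ∧
  (∀ k, x k j → q k j < q i j)

/-- A stable matching: a matching with no blocking pair. -/
def IsStable1 {I J : Type*} (p q : I → J → ℝ) (x : I → J → Prop) : Prop :=
  IsMatching1 p q x ∧ ∀ i j, ¬ Blocks1 p q x i j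

/-- Stability is preserved under transposing the market. -/
lemma IsStable1.transpose {I J : Type*} (p q : I → J → ℝ) (x : I → J → Prop)
    (h : IsStable1 p q x) :
    IsStable1 (fun j i => q i j) (fun j i => p i j) (fun j i => x i j) := by
  obtain ⟨⟨h1, h2, h3⟩, hS⟩ := h
  refine ⟨⟨fun j i k hji hjk => h2 i k j hji hjk,
          fun j k i hij hik => h1 i j k hij hik,
          fun j i hij => ⟨(h3 i j hij).2, (h3 i j hij).1⟩⟩, ?_⟩
  intro j i hB
  obtain ⟨hq0, hp0, hqc, hpc⟩ := hB
  exact hS i j ⟨hp0, hq0, hpc, hqc⟩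

/-- Key lemma: a student matched in one stable matching is matched in every
stable matching. -/
lemma matched_mono {I J : Type*} [Fintype J] (p q : I → J → ℝ)
    (hp : ∀ i, Function.Injective (p i))
    (hq : ∀ j, Function.Injective (fun i => q i j))
    (x x' : I → J → Prop)
    (hx : IsStable1 p q x) (hx' : IsStable1 p q x')
    (i0 : I) (h0 : ∃ j, x i0 j) : ∃ j, x' i0 j := by
  by_contra hun
  push_neg at hun
  obtain ⟨j0, hj0⟩ := h0
  obtain ⟨⟨hxI, hxJ, hxPQ⟩, hxS⟩ := hx
  obtain ⟨⟨hxI', hxJ', hxPQ'⟩, hxS'⟩ := hx'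
  -- invariant: (i,j) is an x-pair and i strictly prefers j to any x'-partner
  set Inv : I × J → Prop :=
    fun z => x z.1 z.2 ∧ ∀ k, x' z.1 k → p z.1 k < p z.1 z.2 with hInvDef
  have inv0 : Inv (i0, j0) := ⟨hj0, fun k hk => absurd hk (hun k)⟩
  -- the step: from an Inv-pair (i,j) produce an Inv-pair (i',j') with x' i' j
  have key : ∀ z : {z : I × J // Inv z}, ∃ w : {z : I × J // Inv z},
      x' w.1.1 z.1.2 := by
    rintro ⟨⟨i, j⟩, hxij, hpref⟩
    have hpq := hxPQ i j hxij
    have hnb := hxS' i j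
    rw [Blocks1] at hnb
    push_neg at hnb
    obtain ⟨i', hx'i'j, hqle⟩ := hnb hpq.1 hpq.2 hpref
    have hii' : i' ≠ i := by
      rintro rfl
      exact lt_irrefl _ (hpref j hx'i'j)
    have hqlt : q i j < q i' j := by
      refine lt_of_le_of_ne hqle fun h => hii' (hq j h.symm)
    -- i' must be matched in x
    have hmatched : ∃ j', x i' j' := by
      by_contra hno
      push_neg at hno
      refine hxS i' j ⟨(hxPQ' i' j hx'i'j).1, (hxPQ' i' j hx'i'j).2,
        fun k hk => absurd hk (hno k), fun k hk => ?_⟩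
      have : k = i := hxJ k i j hk hxij
      subst this
      exact hqlt
    obtain ⟨j', hxi'j'⟩ := hmatched
    have hjj' : j' ≠ j := by
      rintro rfl
      exact hii' (hxJ i' i j' hxi'j' hxij)
    have hplt : p i' j < p i' j' := by
      by_contra hle
      push_neg at hle
      have hne : p i' j' ≠ p i' j := fun h => hjj' (hp i' h)
      have : p i' j' < p i' j := lt_of_le_of_ne hle hne
      refine hxS i' j ⟨(hxPQ' i' j hx'i'j).1, (hxPQ' i' j hx'i'j).2,
        fun k hk => ?_, fun k hk => ?_⟩
      · have hkj : k = j' := hxI i' k j' hk hxi'j'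
        rw [hkj]; exact this
      · have : k = i := hxJ k i j hk hxij
        subst this; exact hqlt
    refine ⟨⟨(i', j'), hxi'j', fun k hk => ?_⟩, hx'i'j⟩
    have : k = j := hxI' i' k j hk hx'i'j
    subst this
    exact hplt
  -- build the infinite sequence
  let step : {z : I × J // Inv z} → {z : I × J // Inv z} :=
    fun z => (key z).choose
  have hstep : ∀ z, x' (step z).1.1 z.1.2 := fun z => (key z).choose_spec
  let s : ℕ → {z : I × J // Inv z} := fun n => step^[n] ⟨(i0, j0), inv0⟩
  have hs0 : s 0 = ⟨(i0, j0), inv0⟩ := rfl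
  have hsucc : ∀ n, s (n + 1) = step (s n) := fun n =>
    Function.iterate_succ_apply' step n _
  have hlink : ∀ n, x' (s (n + 1)).1.1 (s n).1.2 := fun n => by
    rw [hsucc]; exact hstep (s n)
  have hxs : ∀ n, x (s n).1.1 (s n).1.2 := fun n => (s n).2.1
  -- pigeonhole on schools
  obtain ⟨a, b, hab, heq⟩ :=
    Finite.exists_ne_map_eq_of_infinite (fun n : ℕ => (s n).1.2)
  -- backward injectivity of the school sequence
  have back : ∀ a b : ℕ, (s (a + 1)).1.2 = (s (b + 1)).1.2 →
      (s a).1.2 = (s b).1.2 := by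
    intro a b h
    have hia : (s (a + 1)).1.1 = (s (b + 1)).1.1 := by
      refine hxJ _ _ _ (hxs (a + 1)) ?_
      rw [h]; exact hxs (b + 1)
    refine hxI' _ _ _ (hlink a) ?_
    rw [hia]; exact hlink b
  have chain : ∀ d t : ℕ, (s t).1.2 = (s (t + d)).1.2 →
      (s 0).1.2 = (s d).1.2 := by
    intro d t
    induction t with
    | zero => intro h; simpa using h
    | succ t ih =>
      intro h
      apply ih
      apply back
      have : t + 1 + d = t + d + 1 := by omega
      rw [this] at h
      exact h
  have final : ∀ a b : ℕ, a < b → (s a).1.2 = (s b).1.2 → False := by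
    intro a b hlt h
    have hb : b = a + (b - a) := by omega
    set d := b - a with hd
    have hdpos : 0 < d := by omega
    have h0d : (s 0).1.2 = (s d).1.2 := chain d a (by rw [← hb]; exact h)
    have hi0 : i0 = (s d).1.1 :=
      hxJ i0 (s d).1.1 (s d).1.2 (by rw [← h0d]; exact hj0) (hxs d)
    obtain ⟨e, he⟩ : ∃ e, d = e + 1 := ⟨d - 1, by omega⟩
    rw [he] at hi0
    exact hun _ (hi0 ▸ hlink e)
  rcases hab.lt_or_gt with h | h
  · exact final a b h heq
  · exact final b a h heq.symm

/-- Rural Hospitals Theorem, one-to-one case: with strict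
preferences, the sets of matched students and matched schools are the same in
every stable matching. -/
theorem rural_hospitals_one_to_one
    {I J : Type*} [Fintype I] [Fintype J] (p q : I → J → ℝ)
    (hp : ∀ i, Function.Injective (p i))
    (hq : ∀ j, Function.Injective (fun i => q i j))
    (x x' : I → J → Prop)
    (hx : IsStable1 p q x) (hx' : IsStable1 p q x') :
    (∀ i, (∃ j, x i j) ↔ (∃ j, x' i j)) ∧ (∀ j, (∃ i, x i j) ↔ (∃ i, x' i j)) := by
  constructor
  · intro i
    exact ⟨matched_mono p q hp hq x x' hx hx' i,
           matched_mono p q hp hq x' x hx' hx i⟩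
  · intro j
    have hqT : ∀ (j : J), Function.Injective (fun i : I => q i j) := hq
    have hpT : ∀ (i : I), Function.Injective (fun j : J => p i j) := hp
    exact ⟨matched_mono (fun j i => q i j) (fun j i => p i j) hqT
             hpT (fun j i => x i j) (fun j i => x' i j)
             (hx.transpose p q x) (hx'.transpose p q x') j,
           matched_mono (fun j i => q i j) (fun j i => p i j) hqT
             hpT (fun j i => x' i j) (fun j i => x i j)
             (hx'.transpose p q x') (hx.transpose p q x) j⟩
end

section
/- In a stable marriage market with strict preferences, if M is a stable matching and M' is any matching with strictly more matched students than M, then M' is not stable. -/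
/-- with strict preferences, no stable matching can match
strictly more students than another stable matching: if `M` is stable and
`M'` matches strictly more students, then `M'` is not stable. -/
theorem no_stable_matching_matches_strictly_more
    {I J : Type*} [Fintype I] [Fintype J] (p q : I → J → ℝ)
    (hp : ∀ i, Function.Injective (p i))
    (hq : ∀ j, Function.Injective (fun i => q i j))
    (x x' : I → J → Prop)
    (hx : IsStable1 p q x)
    (hx'match : IsMatching1 p q x')
    (hmore : Set.ncard {i | ∃ j, x i j} < Set.ncard {i | ∃ j, x' i j}) :
    ¬ IsStable1 p q x' := by
  intro hx'
  -- there is a student matched in x' but not in x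
  have hnotsub : ¬ ({i | ∃ j, x' i j} ⊆ {i | ∃ j, x i j}) := by
    intro hsub
    exact absurd (Set.ncard_le_ncard hsub (Set.toFinite _)) (not_le.mpr hmore)
  obtain ⟨i0, hi0x', hi0x⟩ := Set.not_subset.mp hnotsub
  obtain ⟨j0, hj0⟩ := hi0x'
  -- invariant
  set P : I × J → Prop := fun a => x' a.1 a.2 ∧ ∀ k, x a.1 k → p a.1 k < p a.1 a.2 with hP
  have h0 : P (i0, j0) := ⟨hj0, fun k hk => absurd ⟨k, hk⟩ hi0x⟩
  -- step lemma
  have step : ∀ a : I × J, P a → ∃ b : I × J, P b ∧ x b.1 a.2 := by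
    rintro ⟨i, j⟩ ⟨hij, hpref⟩
    have hpq := hx'match.2.2 i j hij
    have h4 : ¬ (∀ k, x k j → q k j < q i j) :=
      fun h => hx.2 i j ⟨hpq.1, hpq.2, hpref, h⟩
    push_neg at h4
    obtain ⟨k, hkj, hk⟩ := h4
    have hki : k ≠ i := fun e => absurd (hpref j (e ▸ hkj)) (lt_irrefl _)
    have hqlt : q i j < q k j :=
      lt_of_le_of_ne hk (fun e => hki (hq j (by simpa using e.symm)))
    have hpq' := hx.1.2.2 k j hkj
    have hcond : ∀ m, x' m j → q m j < q k j := by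
      intro m hm
      have : m = i := hx'match.2.1 m i j hm hij
      rw [this]; exact hqlt
    have h3 : ¬ (∀ m, x' k m → p k m < p k j) :=
      fun h => hx'.2 k j ⟨hpq'.1, hpq'.2, h, hcond⟩
    push_neg at h3
    obtain ⟨j', hkj', hj'⟩ := h3
    have hjj : j' ≠ j := fun e => hki (hx'match.2.1 k i j (e ▸ hkj') hij)
    have hplt : p k j < p k j' :=
      lt_of_le_of_ne hj' (fun e => hjj (hp k e.symm))
    refine ⟨(k, j'), ⟨hkj', ?_⟩, hkj⟩
    intro m hm
    have : m = j := hx.1.1 k m j hm hkj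
    rw [this]; exact hplt
  -- build the infinite sequence
  let f : ℕ → {a : I × J // P a} := fun n =>
    Nat.rec ⟨(i0, j0), h0⟩
      (fun _ prev => ⟨Classical.choose (step prev.1 prev.2),
        (Classical.choose_spec (step prev.1 prev.2)).1⟩) n
  have hlink : ∀ n, x (f (n + 1)).1.1 (f n).1.2 := fun n =>
    (Classical.choose_spec (step (f n).1 (f n).2)).2
  have hxp : ∀ n, x' (f n).1.1 (f n).1.2 := fun n => (f n).2.1
  have hf0 : (f 0).1 = (i0, j0) := rfl
  -- distinctness
  have key : ∀ d m, (f m).1.1 = (f (m + d + 1)).1.1 → False := by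
    intro d
    intro m
    induction m with
    | zero =>
      intro h
      rw [Nat.zero_add] at h
      exact hi0x ⟨(f d).1.2, by have := hlink d; rwa [← h] at this⟩
    | succ m ih =>
      intro h
      have hx1 := hlink m
      have hx2 := hlink (m + d + 1)
      rw [show m + 1 + d + 1 = m + d + 1 + 1 by ring] at h
      rw [← h] at hx2
      have hjeq : (f m).1.2 = (f (m + d + 1)).1.2 :=
        hx.1.1 _ _ _ hx1 hx2
      have hieq : (f m).1.1 = (f (m + d + 1)).1.1 :=
        hx'match.2.1 _ _ _ (hxp m) (hjeq ▸ hxp (m + d + 1))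
      exact ih hieq
  have hinj : Function.Injective (fun n => (f n).1.1) := by
    intro a b hab
    by_contra hne
    rcases Nat.lt_or_lt_of_ne hne with hlt | hlt
    · obtain ⟨d, rfl⟩ : ∃ d, b = a + d + 1 := ⟨b - a - 1, by omega⟩
      exact key d a hab
    · obtain ⟨d, rfl⟩ : ∃ d, a = b + d + 1 := ⟨a - b - 1, by omega⟩
      exact key d b hab.symm
  exact absurd hinj (Finite.exists_ne_map_eq_of_infinite (fun n => (f n).1.1) |>.elim
    (fun a ⟨b, hne, he⟩ hinj => hne (hinj he)))
end
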